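/- arXiv:1603.06976 — 4 statements merged into one kernel-verified Lean document; each statement's English description precedes it below -/
import Mathlib

section
/- Let V be a finite-dimensional vector space over GF(q) and let K1 ≤ U1 ≤ U2 ≤ K2 ≤ V be a chain of subspaces. Then the avoiding join of K1 and K2 with respect to U2/U1, i.e. the set {K ≤ V : U1 ∩ K = K1, U2 + K = K2, U1 ∩ K = U2 ∩ K}, consists of exactly q^{(dim U2 − dim K1)(dim K2 − dim U2)} subspaces of V, each of dimension dim K1 + dim K2 − dim U2. -/
open Module Set

/-- The avoiding join of `K₁` and `K₂` with respect to the factor space `U₂ / U₁`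
(for a chain `K₁ ≤ U₁ ≤ U₂ ≤ K₂ ≤ V`): the set of all subspaces `K` of `V` with
`U₁ ⊓ K = K₁`, `U₂ ⊔ K = K₂` and `U₁ ⊓ K = U₂ ⊓ K`. -/
def avoidingJoin {F V : Type*} [Field F] [AddCommGroup V] [Module F V]
    (U₁ U₂ K₁ K₂ : Submodule F V) : Set (Submodule F V) :=
  {K | U₁ ⊓ K = K₁ ∧ U₂ ⊔ K = K₂ ∧ U₁ ⊓ K = U₂ ⊓ K}

/-- Number of complements of a subspace over a finite field. -/
lemma natCard_isCompl_eq {F E : Type*} [Field F] [Fintype F] [AddCommGroup E] [Module F E]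
    [FiniteDimensional F E] (p : Submodule F E) :
    Nat.card {q : Submodule F E // IsCompl p q}
      = Fintype.card F ^ (finrank F p * (finrank F E - finrank F p)) := by
  haveI : Finite E := Module.finite_of_finite F
  obtain ⟨q₀, hq₀⟩ := p.exists_isCompl
  set f₀ : E →ₗ[F] p := p.linearProjOfIsCompl q₀ hq₀ with hf₀def
  have hf₀ : ∀ x : p, f₀ (x : E) = x := fun x => Submodule.linearProjOfIsCompl_apply_left hq₀ x
  have key : ∀ f : {f : E →ₗ[F] p // ∀ x : p, f (x : E) = x}, p ≤ LinearMap.ker ((f : E →ₗ[F] p) - f₀) := by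
    rintro ⟨f, hf⟩ x hx
    simp only [LinearMap.mem_ker, LinearMap.sub_apply]
    rw [hf ⟨x, hx⟩, hf₀ ⟨x, hx⟩, sub_self]
  let e2 : {f : E →ₗ[F] p // ∀ x : p, f (x : E) = x} ≃ ((E ⧸ p) →ₗ[F] p) :=
  { toFun := fun f => p.liftQ ((f : E →ₗ[F] p) - f₀) (key f)
    invFun := fun g => ⟨f₀ + g.comp p.mkQ, fun x => by
      simp [hf₀ x, (Submodule.Quotient.mk_eq_zero p).2 x.2]⟩
    left_inv := fun f => by
      ext x
      simp [Submodule.liftQ_apply]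
    right_inv := fun g => by
      ext x
      simp [Submodule.liftQ_apply] }
  rw [Nat.card_congr ((p.isComplEquivProj).trans e2)]
  haveI : Finite ((E ⧸ p) →ₗ[F] p) := Module.finite_of_finite F
  haveI : Fintype ((E ⧸ p) →ₗ[F] p) := Fintype.ofFinite _
  rw [Nat.card_eq_fintype_card, card_eq_pow_finrank (K := F), Module.finrank_linearMap]
  have hQ : finrank F (E ⧸ p) = finrank F E - finrank F p := by
    have := Submodule.finrank_quotient_add_finrank p
    omega
  rw [hQ, Nat.mul_comm]

/-- For a chain of subspaces `K₁ ≤ U₁ ≤ U₂ ≤ K₂ ≤ V`, the avoiding join of `K₁` and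
`K₂` with respect to `U₂ / U₁` consists of exactly
`q ^ ((dim U₂ - dim K₁) * (dim K₂ - dim U₂))` subspaces of `V`, each of dimension
`dim K₁ + dim K₂ - dim U₂`. -/
theorem avoidingJoin_card_and_finrank {F V : Type*} [Field F] [Fintype F]
    [AddCommGroup V] [Module F V] [FiniteDimensional F V]
    (q : ℕ) (hq : Fintype.card F = q)
    (K₁ U₁ U₂ K₂ : Submodule F V) (h₁ : K₁ ≤ U₁) (h₂ : U₁ ≤ U₂) (h₃ : U₂ ≤ K₂) :
    (avoidingJoin U₁ U₂ K₁ K₂).ncard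
        = q ^ ((finrank F U₂ - finrank F K₁) * (finrank F K₂ - finrank F U₂)) ∧
      ∀ K ∈ avoidingJoin U₁ U₂ K₁ K₂,
        finrank F K = finrank F K₁ + finrank F K₂ - finrank F U₂ := by
  have hsetEq : avoidingJoin U₁ U₂ K₁ K₂ = {K : Submodule F V | U₂ ⊓ K = K₁ ∧ U₂ ⊔ K = K₂} := by
    ext K
    constructor
    · rintro ⟨ha, hb, hc⟩
      exact ⟨hc ▸ ha, hb⟩
    · rintro ⟨ha, hb⟩
      have hK₁K : K₁ ≤ K := ha ▸ inf_le_right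
      have h1 : U₁ ⊓ K = K₁ := by
        apply le_antisymm
        · exact ha ▸ inf_le_inf_right K h₂
        · exact le_inf h₁ hK₁K
      exact ⟨h1, hb, h1.trans ha.symm⟩
  have hdim : ∀ K ∈ avoidingJoin U₁ U₂ K₁ K₂,
      finrank F K = finrank F K₁ + finrank F K₂ - finrank F U₂ := by
    intro K hK
    rw [hsetEq] at hK
    obtain ⟨ha, hb⟩ := hK
    have h5 := Submodule.finrank_sup_add_finrank_inf_eq U₂ K
    rw [ha, hb] at h5
    have h6 : finrank F U₂ ≤ finrank F K₂ := Submodule.finrank_mono h₃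
    omega
  refine ⟨?_, hdim⟩
  -- set up the ambient module K₂ and its quotient by K₁
  set k₁' : Submodule F K₂ := K₁.comap K₂.subtype with hk₁'
  set p' : Submodule F K₂ := U₂.comap K₂.subtype with hp'
  set pbar : Submodule F (↥K₂ ⧸ k₁') := p'.map k₁'.mkQ with hpbar
  have h₁₃ : K₁ ≤ K₂ := h₁.trans (h₂.trans h₃)
  have hk₁p' : k₁' ≤ p' := Submodule.comap_mono (h₁.trans h₂)
  have hsub_inj : Function.Injective K₂.subtype := Submodule.injective_subtype K₂
  have hmkQ_surj : Function.Surjective k₁'.mkQ := Submodule.mkQ_surjective k₁'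
  -- the bijection
  have hcard : Nat.card (avoidingJoin U₁ U₂ K₁ K₂ : Set (Submodule F V))
      = Nat.card {W : Submodule F (↥K₂ ⧸ k₁') // IsCompl pbar W} := by
    rw [hsetEq]
    apply Nat.card_congr
    refine
      { toFun := fun K => ⟨((K : Submodule F V).comap K₂.subtype).map k₁'.mkQ, ?_⟩
        invFun := fun W => ⟨((W : Submodule F (↥K₂ ⧸ k₁')).comap k₁'.mkQ).map K₂.subtype, ?_⟩
        left_inv := ?_
        right_inv := ?_ }
    · -- forward well-defined
      obtain ⟨K, ha, hb⟩ := K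
      set K' : Submodule F K₂ := K.comap K₂.subtype with hK'
      have hKle : K ≤ K₂ := hb ▸ le_sup_right
      have hinf' : p' ⊓ K' = k₁' := by
        rw [hp', hK', hk₁', ← Submodule.comap_inf, ha]
      have hk₁K' : k₁' ≤ K' := hinf' ▸ inf_le_right
      have hsup' : p' ⊔ K' = ⊤ := by
        apply Submodule.map_injective_of_injective hsub_inj
        rw [Submodule.map_sup, Submodule.map_comap_subtype, Submodule.map_comap_subtype,
          Submodule.map_top, Submodule.range_subtype, inf_eq_right.2 h₃, inf_eq_right.2 hKle, hb]
      constructor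
      · rw [disjoint_iff]
        apply Submodule.comap_injective_of_surjective hmkQ_surj
        rw [Submodule.comap_inf, hpbar, Submodule.comap_map_mkQ, Submodule.comap_map_mkQ,
          Submodule.comap_bot, Submodule.ker_mkQ, sup_eq_right.2 hk₁p', sup_eq_right.2 hk₁K', hinf']
      · rw [codisjoint_iff, hpbar, ← Submodule.map_sup, hsup', Submodule.map_top,
          Submodule.range_mkQ]
    · -- backward well-defined
      obtain ⟨W, hW⟩ := W
      set K' : Submodule F K₂ := W.comap k₁'.mkQ with hK'
      have hinfW : pbar ⊓ W = ⊥ := disjoint_iff.1 hW.1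
      have hsupW : pbar ⊔ W = ⊤ := codisjoint_iff.1 hW.2
      have hcomap_pbar : pbar.comap k₁'.mkQ = p' := by
        rw [hpbar, Submodule.comap_map_mkQ, sup_eq_right.2 hk₁p']
      have hinf' : p' ⊓ K' = k₁' := by
        rw [← hcomap_pbar, hK', ← Submodule.comap_inf, hinfW, Submodule.comap_bot,
          Submodule.ker_mkQ]
      have hk₁K' : k₁' ≤ K' := fun x hx => by
        show k₁'.mkQ x ∈ W
        rw [Submodule.mkQ_apply, (Submodule.Quotient.mk_eq_zero _).2 hx]
        exact W.zero_mem
      have hsup' : p' ⊔ K' = ⊤ := by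
        have h7 : k₁' ≤ p' ⊔ K' := hk₁p'.trans le_sup_left
        have h8 : (p' ⊔ K').map k₁'.mkQ = ⊤ := by
          rw [Submodule.map_sup, hK', Submodule.map_comap_eq, Submodule.range_mkQ, top_inf_eq,
            ← hpbar, hsupW]
        have := congrArg (Submodule.comap k₁'.mkQ) h8
        rwa [Submodule.comap_map_mkQ, sup_eq_right.2 h7, Submodule.comap_top] at this
      have hmapp' : p'.map K₂.subtype = U₂ := by
        rw [hp', Submodule.map_comap_subtype, inf_eq_right.2 h₃]
      have hmapk₁' : k₁'.map K₂.subtype = K₁ := by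
        rw [hk₁', Submodule.map_comap_subtype, inf_eq_right.2 h₁₃]
      constructor
      · rw [← hmapp', ← Submodule.map_inf _ hsub_inj, hinf', hmapk₁']
      · rw [← hmapp', ← Submodule.map_sup, hsup', Submodule.map_top, Submodule.range_subtype]
    · -- left inverse
      rintro ⟨K, ha, hb⟩
      have hKle : K ≤ K₂ := hb ▸ le_sup_right
      have hk₁K' : k₁' ≤ K.comap K₂.subtype := by
        have hK₁K : K₁ ≤ K := by
          rw [hsetEq] at *
          exact ha ▸ inf_le_right
        exact Submodule.comap_mono hK₁K
      apply Subtype.ext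
      simp only
      rw [Submodule.comap_map_mkQ, sup_eq_right.2 hk₁K', Submodule.map_comap_subtype,
        inf_eq_right.2 hKle]
    · -- right inverse
      rintro ⟨W, hW⟩
      apply Subtype.ext
      simp only
      rw [Submodule.comap_map_eq, Submodule.ker_subtype, sup_bot_eq, Submodule.map_comap_eq,
        Submodule.range_mkQ, top_inf_eq]
  -- finrank computations
  have ea : finrank F k₁' = finrank F K₁ :=
    LinearEquiv.finrank_eq (Submodule.comapSubtypeEquivOfLe h₁₃)
  have eb : finrank F p' = finrank F U₂ :=
    LinearEquiv.finrank_eq (Submodule.comapSubtypeEquivOfLe h₃)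
  have eQ : finrank F (↥K₂ ⧸ k₁') = finrank F K₂ - finrank F K₁ := by
    have := Submodule.finrank_quotient_add_finrank k₁'
    omega
  have epbar : finrank F pbar = finrank F U₂ - finrank F K₁ := by
    have h9 := LinearMap.finrank_range_add_finrank_ker (k₁'.mkQ.domRestrict p')
    rw [LinearMap.range_domRestrict, LinearMap.ker_domRestrict, Submodule.ker_mkQ] at h9
    have h10 : finrank F (k₁'.comap p'.subtype) = finrank F k₁' :=
      LinearEquiv.finrank_eq (Submodule.comapSubtypeEquivOfLe hk₁p')
    rw [h10, ea, eb, ← hpbar] at h9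
    omega
  rw [← Nat.card_coe_set_eq, hcard, natCard_isCompl_eq, hq, epbar, eQ]
  congr 1
  have hab : finrank F K₁ ≤ finrank F U₂ := Submodule.finrank_mono (h₁.trans h₂)
  have hbc : finrank F U₂ ≤ finrank F K₂ := Submodule.finrank_mono h₃
  congr 1
  omega
end

section
/- Let V be a v-dimensional vector space over GF(q), let {0} = U_0 < U_1 < ... < U_v = V be a maximal chain of subspaces (so dim U_j = j), let 0 ≤ k ≤ v and s ∈ {0,...,v−k−1}. Then for every k-dimensional subspace K of V there is exactly one index i ∈ {0,...,k} such that dim(K ∩ U_{s+i}) = i and K ∩ U_{s+i+1} = K ∩ U_{s+i}. Consequently, the Graßmannian of all k-dimensional subspaces of V is the disjoint union over i ∈ {0,...,k} of the avoiding joins of K1 := K ∩ U_{s+i} and K2 := K + U_{s+i+1} with respect to U_{s+i+1}/U_{s+i}. -/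
open Module Set

/-- The piece of the decomposition of the Graßmannian belonging to the index `i`:
the union of the avoiding joins (with respect to `U (s+i+1) / U (s+i)`) of all
`i`-dimensional subspaces `K₁` of `U (s+i)` and all `(k+s+1)`-dimensional subspaces
`K₂` of `V` containing `U (s+i+1)`. -/
def joinPiece {F V : Type*} [Field F] [AddCommGroup V] [Module F V]
    (U : ℕ → Submodule F V) (k s i : ℕ) : Set (Submodule F V) :=
  ⋃ K₁ ∈ {W : Submodule F V | W ≤ U (s + i) ∧ Module.finrank F W = i},
    ⋃ K₂ ∈ {W : Submodule F V | U (s + i + 1) ≤ W ∧ Module.finrank F W = k + s + 1},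
      avoidingJoin (U (s + i)) (U (s + i + 1)) K₁ K₂

lemma finrank_inf_step {F V : Type*} [Field F] [AddCommGroup V] [Module F V]
    [FiniteDimensional F V] (K A B : Submodule F V) (hAB : A ≤ B)
    (hB : finrank F B ≤ finrank F A + 1) :
    finrank F ↥(K ⊓ B) ≤ finrank F ↥(K ⊓ A) + 1 := by
  have h1 : ((K ⊓ B) ⊔ A : Submodule F V) ≤ B := sup_le inf_le_right hAB
  have h2 : (K ⊓ B) ⊓ A = K ⊓ A := by
    rw [inf_assoc, inf_eq_right.mpr hAB]
  have h3 := Submodule.finrank_sup_add_finrank_inf_eq (K ⊓ B) A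
  have h4 : finrank F ↥((K ⊓ B) ⊔ A) ≤ finrank F B := Submodule.finrank_mono h1
  rw [h2] at h3
  omega

/-- Given a maximal chain `{0} = U 0 < U 1 < … < U v = V` of subspaces of a
`v`-dimensional space `V` over `GF(q)`, `0 ≤ k ≤ v` and `s ∈ {0, …, v-k-1}`:
every `k`-dimensional subspace `K` of `V` admits exactly one index `i ∈ {0, …, k}`
with `dim (K ⊓ U (s+i)) = i` and `K ⊓ U (s+i+1) = K ⊓ U (s+i)`; consequently the
Graßmannian of the `k`-dimensional subspaces of `V` is the disjoint union, over
`i ∈ {0, …, k}`, of the avoiding joins of `K₁ := K ⊓ U (s+i)` and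
`K₂ := K ⊔ U (s+i+1)` with respect to `U (s+i+1) / U (s+i)`. -/
theorem grassmannian_eq_disjoint_union_avoidingJoins {F V : Type*} [Field F] [Fintype F]
    [AddCommGroup V] [Module F V] [FiniteDimensional F V]
    (v k s : ℕ) (hv : finrank F V = v) (hk : k ≤ v) (hs : s + k + 1 ≤ v)
    (U : ℕ → Submodule F V) (hchain : ∀ j < v, U j < U (j + 1))
    (hdim : ∀ j ≤ v, finrank F (U j) = j) :
    (∀ K : Submodule F V, finrank F K = k →
      ∃! i : ℕ, i ≤ k ∧ finrank F ↥(K ⊓ U (s + i)) = i ∧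
        K ⊓ U (s + i + 1) = K ⊓ U (s + i)) ∧
    ({W : Submodule F V | finrank F W = k}
        = ⋃ i ∈ Finset.range (k + 1), joinPiece U k s i) ∧
    Set.PairwiseDisjoint ↑(Finset.range (k + 1)) (joinPiece U k s) := by
  -- monotonicity of the chain
  have hmono : ∀ a b : ℕ, a ≤ b → b ≤ v → U a ≤ U b := by
    intro a b hab hbv
    induction b with
    | zero => exact Nat.le_zero.mp hab ▸ le_rfl
    | succ n ih =>
      rcases Nat.eq_or_lt_of_le hab with h | h
      · exact h ▸ le_rfl
      · exact (ih (by omega) (by omega)).trans (hchain n (by omega)).le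
  -- the key unique-index statement
  have hkey : ∀ K : Submodule F V, finrank F K = k →
      ∃! i : ℕ, i ≤ k ∧ finrank F ↥(K ⊓ U (s + i)) = i ∧
        K ⊓ U (s + i + 1) = K ⊓ U (s + i) := by
    intro K hK
    set f : ℕ → ℕ := fun i => finrank F ↥(K ⊓ U (s + i)) with hf
    have hfmono : ∀ a b : ℕ, a ≤ b → b ≤ k + 1 → f a ≤ f b := by
      intro a b hab hb
      exact Submodule.finrank_mono (inf_le_inf_left K (hmono (s+a) (s+b) (by omega) (by omega)))
    have hfstep : ∀ a : ℕ, a ≤ k → f (a + 1) ≤ f a + 1 := by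
      intro a ha
      have := finrank_inf_step K (U (s+a)) (U (s+a+1)) (hchain (s+a) (by omega)).le
        (by rw [hdim (s+a) (by omega), hdim (s+a+1) (by omega)])
      exact this
    have hfslope : ∀ a b : ℕ, a ≤ b → b ≤ k + 1 → f b ≤ f a + (b - a) := by
      intro a b hab hb
      induction b with
      | zero =>
        have : a = 0 := Nat.le_zero.mp hab
        subst this; simp
      | succ n ih =>
        rcases Nat.eq_or_lt_of_le hab with h | h
        · subst h; simp
        · have h1 := hfstep n (by omega)
          have h2 := ih (by omega) (by omega)
          omega
    have hfk1 : f (k + 1) ≤ k := by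
      have h := Submodule.finrank_mono (inf_le_left : K ⊓ U (s + (k+1)) ≤ K)
      rw [hK] at h
      exact h
    -- the index
    set i := Nat.findGreatest (fun i => i ≤ f i) (k + 1) with hi
    have hPi : i ≤ f i :=
      Nat.findGreatest_spec (P := fun i => i ≤ f i) (Nat.zero_le _) (Nat.zero_le _)
    have hile : i ≤ k + 1 := Nat.findGreatest_le _
    have hik : i ≤ k := by
      rcases Nat.eq_or_lt_of_le hile with h | h
      · rw [h] at hPi; omega
      · omega
    have hnP : ¬ (i + 1 ≤ f (i + 1)) :=
      Nat.findGreatest_is_greatest (P := fun i => i ≤ f i)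
        (Nat.lt_succ_self i) (by omega)
    have hmle : f i ≤ f (i + 1) := hfmono i (i+1) (by omega) (by omega)
    have hfi : f i = i := by omega
    have hfi1 : f (i + 1) = i := by omega
    have heqsub : K ⊓ U (s + i + 1) = K ⊓ U (s + i) := by
      refine (Submodule.eq_of_le_of_finrank_le
        (inf_le_inf_left K (hchain (s+i) (by omega)).le) ?_).symm
      have h : f (i + 1) ≤ f i := by omega
      exact h
    -- uniqueness helper
    have huniq : ∀ a b : ℕ, a < b → b ≤ k →
        K ⊓ U (s + a + 1) = K ⊓ U (s + a) → f a = a → f b = b → False := by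
      intro a b hab hbk heq hfa hfb
      have h1 : f (a + 1) = f a :=
        congrArg (fun p : Submodule F V => finrank F ↥p) heq
      have h2 := hfslope (a+1) b (by omega) (by omega)
      omega
    refine ⟨i, ⟨hik, hfi, heqsub⟩, ?_⟩
    rintro j ⟨hjk, hfj, heqj⟩
    rcases lt_trichotomy j i with h | h | h
    · exact (huniq j i h hik heqj hfj hfi).elim
    · exact h
    · exact (huniq i j h hjk heqsub hfi hfj).elim
  -- characterization of the join pieces
  have hchar : ∀ i : ℕ, i ≤ k → ∀ W : Submodule F V,
      W ∈ joinPiece U k s i ↔ finrank F W = k ∧ finrank F ↥(W ⊓ U (s + i)) = i ∧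
        W ⊓ U (s + i + 1) = W ⊓ U (s + i) := by
    intro i hik W
    have hd1 : finrank F ↥(U (s + i)) = s + i := hdim _ (by omega)
    have hd2 : finrank F ↥(U (s + i + 1)) = s + i + 1 := hdim _ (by omega)
    constructor
    · intro hW
      simp only [joinPiece, avoidingJoin, Set.mem_iUnion, Set.mem_setOf_eq] at hW
      obtain ⟨K₁, ⟨hK₁le, hK₁r⟩, K₂, ⟨hK₂le, hK₂r⟩, h1, h2, h3⟩ := hW
      have hr1 : finrank F ↥(W ⊓ U (s + i)) = i := by
        rw [inf_comm W (U (s+i)), h1, hK₁r]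
      have heq : W ⊓ U (s + i + 1) = W ⊓ U (s + i) := by
        rw [inf_comm W (U (s+i+1)), inf_comm W (U (s+i)), ← h3]
      have hr2 : finrank F ↥(U (s + i + 1) ⊓ W) = i := by
        rw [← h3, h1, hK₁r]
      have hsum := Submodule.finrank_sup_add_finrank_inf_eq (U (s + i + 1)) W
      rw [h2, hK₂r, hr2, hd2] at hsum
      exact ⟨by omega, hr1, heq⟩
    · rintro ⟨hWk, hWr, hWeq⟩
      have hr0 : finrank F ↥(U (s + i) ⊓ W) = i := by
        rw [inf_comm (U (s+i)) W]; exact hWr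
      have hr2 : finrank F ↥(U (s + i + 1) ⊓ W) = i := by
        rw [inf_comm (U (s+i+1)) W, hWeq]; exact hWr
      simp only [joinPiece, avoidingJoin, Set.mem_iUnion, Set.mem_setOf_eq]
      refine ⟨U (s + i) ⊓ W, ⟨inf_le_left, hr0⟩,
        U (s + i + 1) ⊔ W, ⟨le_sup_left, ?_⟩, rfl, rfl, ?_⟩
      · have hsum := Submodule.finrank_sup_add_finrank_inf_eq (U (s + i + 1)) W
        rw [hr2, hd2, hWk] at hsum
        omega
      · rw [inf_comm (U (s+i)) W, inf_comm (U (s+i+1)) W, hWeq]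
  refine ⟨hkey, ?_, ?_⟩
  · ext W
    simp only [Set.mem_setOf_eq, Set.mem_iUnion, Finset.mem_range]
    constructor
    · intro hW
      obtain ⟨i, ⟨hik, hr, heq⟩, -⟩ := hkey W hW
      exact ⟨i, by omega, (hchar i hik W).mpr ⟨hW, hr, heq⟩⟩
    · rintro ⟨i, hik, hW⟩
      exact ((hchar i (by omega) W).mp hW).1
  · intro i hi j hj hij
    simp only [Finset.coe_range, Set.mem_Iio] at hi hj
    refine Set.disjoint_left.mpr fun W hWi hWj => ?_
    obtain ⟨hWk, hri, heqi⟩ := (hchar i (by omega) W).mp hWi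
    obtain ⟨-, hrj, heqj⟩ := (hchar j (by omega) W).mp hWj
    obtain ⟨m, -, hm⟩ := hkey W hWk
    exact hij ((hm i ⟨by omega, hri, heqi⟩).trans (hm j ⟨by omega, hrj, heqj⟩).symm)
end

section
/- (Derived large set.) Let q be a prime power and let 1 ≤ t ≤ k ≤ v and N ≥ 2 be integers. If a large set LS_q[N](t,k,v) exists, then a large set LS_q[N](t−1, k−1, v−1) exists. -/
open Module Set LinearMap

set_option synthInstance.maxHeartbeats 1000000

/-- Gaussian binomial coefficient `[m choose r]_q`, via the q-Pascal recursion
`[m+1 choose r+1]_q = [m choose r]_q + q^(r+1) * [m choose r+1]_q`. -/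
def gaussBinom (q : ℕ) : ℕ → ℕ → ℕ
  | _, 0 => 1
  | 0, _ + 1 => 0
  | m + 1, r + 1 => gaussBinom q m r + q ^ (r + 1) * gaussBinom q m (r + 1)

/-- `B` is a `t`-`(v, k, lam)_q` subspace design in the ambient space `V`:
all blocks are `k`-dimensional subspaces and every `t`-dimensional subspace of `V`
lies in exactly `lam` blocks. -/
def IsSubspaceDesign {F V : Type*} [Field F] [AddCommGroup V] [Module F V]
    (t k lam : ℕ) (B : Set (Submodule F V)) : Prop :=
  (∀ W ∈ B, Module.finrank F W = k) ∧
  ∀ T : Submodule F V, Module.finrank F T = t → {W | W ∈ B ∧ T ≤ W}.ncard = lam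

/-- `P` is a large set: a partition of the set of all `k`-dimensional subspaces of `V`
into `N` (pairwise disjoint) parts, each being a `t`-`(v, k, lam)_q` subspace design. -/
def IsLargeSet {F V : Type*} [Field F] [AddCommGroup V] [Module F V]
    (N t k lam : ℕ) (P : Fin N → Set (Submodule F V)) : Prop :=
  (Pairwise fun i j => Disjoint (P i) (P j)) ∧
  (⋃ i, P i) = {W : Submodule F V | Module.finrank F W = k} ∧
  ∀ i, IsSubspaceDesign t k lam (P i)

/-- A large set `LS_q[N](t, k, v)` exists: for the `v`-dimensional vector space over
the field with `q` elements, the set of all `k`-dimensional subspaces can be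
partitioned into `N` subspace designs with parameters `t`-`(v, k, lam)_q`, where
`lam = [v - t choose k - t]_q / N`. -/
def ExistsLargeSet (q N t k v : ℕ) : Prop :=
  ∀ (F : Type) [Field F] [Fintype F], Fintype.card F = q →
    ∃ lam : ℕ, N * lam = gaussBinom q (v - t) (k - t) ∧
      ∃ P : Fin N → Set (Submodule F (Fin v → F)), IsLargeSet N t k lam P

section Aux

variable {F : Type} [Field F] {m : ℕ}

noncomputable def derProj (F : Type) [Field F] (m : ℕ) :
    (Fin (m + 1) → F) →ₗ[F] (Fin m → F) :=
  LinearMap.funLeft F F Fin.castSucc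

lemma derProj_surj : Function.Surjective (derProj F m) :=
  LinearMap.funLeft_surjective_of_injective F F _ (Fin.castSucc_injective m)

lemma derProj_range : LinearMap.range (derProj F m) = ⊤ :=
  LinearMap.range_eq_top.2 derProj_surj

lemma derProj_ker_finrank : Module.finrank F (LinearMap.ker (derProj F m)) = 1 := by
  have h := (derProj F m).finrank_range_add_finrank_ker
  rw [derProj_range, finrank_top] at h
  simp [Module.finrank_pi] at h
  omega

lemma derProj_finrank_map {W : Submodule F (Fin (m + 1) → F)}
    (hW : LinearMap.ker (derProj F m) ≤ W) :
    Module.finrank F (W.map (derProj F m)) + 1 = Module.finrank F W := by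
  have h := ((derProj F m).domRestrict W).finrank_range_add_finrank_ker
  rw [LinearMap.range_domRestrict, LinearMap.ker_domRestrict] at h
  have e : Module.finrank F (Submodule.comap W.subtype (LinearMap.ker (derProj F m)))
      = Module.finrank F (LinearMap.ker (derProj F m)) :=
    (Submodule.comapSubtypeEquivOfLe hW).finrank_eq
  rw [e, derProj_ker_finrank] at h
  exact h

lemma derProj_ker_le_comap (U : Submodule F (Fin m → F)) :
    LinearMap.ker (derProj F m) ≤ U.comap (derProj F m) := by
  intro x hx
  simp only [LinearMap.mem_ker] at hx
  simp [Submodule.mem_comap, hx]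

lemma derProj_map_comap (U : Submodule F (Fin m → F)) :
    (U.comap (derProj F m)).map (derProj F m) = U := by
  rw [Submodule.map_comap_eq, derProj_range, top_inf_eq]

lemma derProj_comap_map {W : Submodule F (Fin (m + 1) → F)}
    (hW : LinearMap.ker (derProj F m) ≤ W) :
    (W.map (derProj F m)).comap (derProj F m) = W := by
  rw [Submodule.comap_map_eq, sup_eq_left.2 hW]

lemma derProj_finrank_comap (U : Submodule F (Fin m → F)) :
    Module.finrank F (U.comap (derProj F m)) = Module.finrank F U + 1 := by
  have := derProj_finrank_map (derProj_ker_le_comap U)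
  rw [derProj_map_comap] at this
  omega

lemma derProj_le_iff {W : Submodule F (Fin (m + 1) → F)} {U : Submodule F (Fin m → F)}
    (hW : LinearMap.ker (derProj F m) ≤ W) :
    U ≤ W.map (derProj F m) ↔ U.comap (derProj F m) ≤ W := by
  constructor
  · intro h
    calc U.comap (derProj F m) ≤ ((W.map (derProj F m)).comap (derProj F m)) :=
        Submodule.comap_mono h
      _ = W := derProj_comap_map hW
  · intro h
    calc U = (U.comap (derProj F m)).map (derProj F m) := (derProj_map_comap U).symm
      _ ≤ W.map (derProj F m) := Submodule.map_mono h

end Aux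

/-- Derived large set: if a large set `LS_q[N](t, k, v)` exists (with `1 ≤ t ≤ k ≤ v`
and `N ≥ 2`), then a large set `LS_q[N](t-1, k-1, v-1)` exists. -/
theorem existsLargeSet_derived (q N t k v : ℕ) (hq : IsPrimePow q)
    (ht : 1 ≤ t) (htk : t ≤ k) (hkv : k ≤ v) (hN : 2 ≤ N)
    (h : ExistsLargeSet q N t k v) :
    ExistsLargeSet q N (t - 1) (k - 1) (v - 1) := by
  obtain ⟨m, rfl⟩ : ∃ m, v = m + 1 := ⟨v - 1, by omega⟩
  intro F _ _ hF
  obtain ⟨lam, hlam, P, hdisj, hunion, hdesign⟩ := h F hF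
  have e0 : m + 1 - 1 = m := by omega
  refine ⟨lam, ?_, ?_⟩
  · have e1 : m + 1 - 1 - (t - 1) = m + 1 - t := by omega
    have e2 : k - 1 - (t - 1) = k - t := by omega
    rw [e1, e2]; exact hlam
  · rw [e0]
    have hunion' : ∀ W : Submodule F (Fin (m + 1) → F),
        Module.finrank F W = k → ∃ i, W ∈ P i := by
      intro W hW
      have : W ∈ ⋃ i, P i := by rw [hunion]; exact hW
      exact Set.mem_iUnion.1 this
    have hrank : ∀ i, ∀ W ∈ P i, Module.finrank F W = k := fun i => (hdesign i).1
    refine ⟨fun i => (Submodule.map (derProj F m)) '' {W | W ∈ P i ∧ LinearMap.ker (derProj F m) ≤ W}, ?_, ?_, ?_⟩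
    · intro i j hij
      rw [Set.disjoint_left]
      rintro X ⟨W1, ⟨h1, hk1⟩, rfl⟩ ⟨W2, ⟨h2, hk2⟩, hW2⟩
      have hW12 : W2 = W1 := by
        have := congrArg (Submodule.comap (derProj F m)) hW2
        rwa [derProj_comap_map hk2, derProj_comap_map hk1] at this
      subst hW12
      exact Set.disjoint_left.mp (hdisj hij) h1 h2
    · ext U
      simp only [Set.mem_iUnion, Set.mem_image, Set.mem_setOf_eq]
      constructor
      · rintro ⟨i, W, ⟨hW, hker⟩, rfl⟩
        have h1 := derProj_finrank_map hker
        have h2 := hrank i W hW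
        omega
      · intro hU
        have hfr : Module.finrank F (U.comap (derProj F m)) = k := by
          rw [derProj_finrank_comap]; omega
        obtain ⟨i, hi⟩ := hunion' _ hfr
        exact ⟨i, U.comap (derProj F m), ⟨hi, derProj_ker_le_comap U⟩, derProj_map_comap U⟩
    · intro i
      constructor
      · rintro X ⟨W, ⟨hW, hker⟩, rfl⟩
        have h1 := derProj_finrank_map hker
        have h2 := hrank i W hW
        omega
      · intro T' hT'
        have hTfr : Module.finrank F (T'.comap (derProj F m)) = t := by
          rw [derProj_finrank_comap]; omega
        have key : {W' | W' ∈ (Submodule.map (derProj F m)) '' {W | W ∈ P i ∧ LinearMap.ker (derProj F m) ≤ W}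
              ∧ T' ≤ W'}
            = (Submodule.map (derProj F m)) '' {W | W ∈ P i ∧ T'.comap (derProj F m) ≤ W} := by
          ext X
          simp only [Set.mem_setOf_eq, Set.mem_image]
          constructor
          · rintro ⟨⟨W, ⟨hW, hker⟩, rfl⟩, hle⟩
            exact ⟨W, ⟨hW, (derProj_le_iff hker).1 hle⟩, rfl⟩
          · rintro ⟨W, ⟨hW, hle⟩, rfl⟩
            have hker : LinearMap.ker (derProj F m) ≤ W := le_trans (derProj_ker_le_comap T') hle
            exact ⟨⟨W, ⟨hW, hker⟩, rfl⟩, (derProj_le_iff hker).2 hle⟩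
        rw [key, Set.ncard_image_of_injOn, (hdesign i).2 _ hTfr]
        intro W1 hW1 W2 hW2 hEq
        have hk1 : LinearMap.ker (derProj F m) ≤ W1 := le_trans (derProj_ker_le_comap T') hW1.2
        have hk2 : LinearMap.ker (derProj F m) ≤ W2 := le_trans (derProj_ker_le_comap T') hW2.2
        have := congrArg (Submodule.comap (derProj F m)) hEq
        rwa [derProj_comap_map hk1, derProj_comap_map hk2] at this
end

section
/- (Residual large set.) Let q be a prime power and let 1 ≤ t ≤ k ≤ v−1 and N ≥ 2 be integers. If a large set LS_q[N](t,k,v) exists, then a large set LS_q[N](t−1, k, v−1) exists. -/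
open Module Set

/-!
Let `H` be a hyperplane of `V = F^v` and `T ≤ H` a `(t-1)`-subspace. Double counting the blocks
of a `t`-design through `T` against the `t`-subspaces through `T` shows that there are
`λ [v-t+1]_q / [k-t+1]_q` of them, and that `q^(v-k) λ` of them are not contained in `H`. Hence
the blocks inside `H` form a `(t-1)`-design in `H ≅ F^(v-1)` with `λ' [k-t+1]_q = λ [v-k]_q`,
the same for every part of a large set. So the parts restrict to a large set on `H`, and
`N λ' = [v-t, k-t+1]_q` follows from the absorption identity
`[m, r+1]_q [r+1]_q = [m, r]_q [m-r]_q`.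
-/

def qNumber (q n : ℕ) : ℕ := ∑ i ∈ Finset.range n, q ^ i

lemma qNumber_zero (q : ℕ) : qNumber q 0 = 0 := rfl

lemma qNumber_succ (q n : ℕ) : qNumber q (n + 1) = qNumber q n + q ^ n :=
  Finset.sum_range_succ _ n

lemma qNumber_add (q m n : ℕ) : qNumber q (m + n) = qNumber q m + q ^ m * qNumber q n := by
  simp only [qNumber, Finset.sum_range_add, pow_add, Finset.mul_sum]

lemma qNumber_pos (q : ℕ) {n : ℕ} (hn : 0 < n) : 0 < qNumber q n :=
  Finset.sum_pos' (fun _ _ => Nat.zero_le _) ⟨0, Finset.mem_range.2 hn, by simp⟩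

lemma qNumber_mul_sub_one {q : ℕ} (hq : 1 ≤ q) (n : ℕ) : qNumber q n * (q - 1) = q ^ n - 1 :=
  geom_sum_mul_of_one_le hq n

lemma gaussBinom_succ_succ (q m r : ℕ) :
    gaussBinom q (m + 1) (r + 1) = gaussBinom q m r + q ^ (r + 1) * gaussBinom q m (r + 1) :=
  rfl

lemma gaussBinom_eq_zero_of_lt (q : ℕ) {m r : ℕ} (h : m < r) : gaussBinom q m r = 0 := by
  induction m generalizing r with
  | zero => obtain ⟨r, rfl⟩ := Nat.exists_eq_succ_of_ne_zero h.ne'; rfl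
  | succ m ih =>
    obtain ⟨r, rfl⟩ := Nat.exists_eq_succ_of_ne_zero (Nat.ne_zero_of_lt h)
    rw [gaussBinom_succ_succ, ih (by omega), ih (by omega), mul_zero, add_zero]

/-- The q-analogue of `(m choose r+1) * (r+1) = (m choose r) * (m-r)`. -/
theorem gaussBinom_succ_mul_qNumber (q m r : ℕ) :
    gaussBinom q m (r + 1) * qNumber q (r + 1) = gaussBinom q m r * qNumber q (m - r) := by
  induction m generalizing r with
  | zero => cases r <;> simp [gaussBinom, qNumber]
  | succ m ih =>
    have split {s : ℕ} (hs : s ≤ m) :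
        qNumber q (m + 1) = qNumber q (s + 1) + q ^ (s + 1) * qNumber q (m - s) := by
      rw [← qNumber_add]; congr 1; omega
    have absorb (r : ℕ) : gaussBinom q (m + 1) r * qNumber q (m + 1 - r)
        = gaussBinom q m r * qNumber q (m + 1) := by
      rcases r with _ | s
      · simp [gaussBinom]
      rcases le_or_gt s m with hs | hs
      · rw [gaussBinom_succ_succ, Nat.add_sub_add_right, add_mul, ← ih s, split hs]
        ring
      · simp [gaussBinom_succ_succ, gaussBinom_eq_zero_of_lt q hs,
          gaussBinom_eq_zero_of_lt q (Nat.lt_succ_of_lt hs)]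
    rcases le_or_gt r m with hr | hr
    · rw [gaussBinom_succ_succ, add_mul, mul_assoc, ih r, absorb r, split hr]
      ring
    · simp [gaussBinom_eq_zero_of_lt q (Nat.succ_lt_succ hr), Nat.sub_eq_zero_of_le hr,
        qNumber_zero]

theorem Set.ncard_mul_eq_ncard_mul {α β : Type*} [Finite α] [Finite β] (r : α → β → Prop)
    {s : Set α} {t : Set β} {m n : ℕ} (hm : ∀ a ∈ s, {b ∈ t | r a b}.ncard = m)
    (hn : ∀ b ∈ t, {a ∈ s | r a b}.ncard = n) : s.ncard * m = t.ncard * n := by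
  classical
  obtain ⟨s, rfl⟩ := s.toFinite.exists_finset_coe
  obtain ⟨t, rfl⟩ := t.toFinite.exists_finset_coe
  simp only [Set.ncard_coe_finset]
  refine Finset.card_mul_eq_card_mul r (fun a ha => ?_) (fun b hb => ?_)
  · rw [← hm a ha, ← Set.ncard_coe_finset, Finset.coe_bipartiteAbove]; rfl
  · rw [← hn b hb, ← Set.ncard_coe_finset, Finset.coe_bipartiteBelow]; rfl

section Geometry

variable {F V : Type*} [Field F] [AddCommGroup V] [Module F V]

variable (F) in
def coversBetween (T U : Submodule F V) : Set (Submodule F V) :=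
  {T' | finrank F T' = finrank F T + 1 ∧ T ≤ T' ∧ T' ≤ U}

variable [FiniteDimensional F V]

lemma coversBetween_sep_mem_eq_singleton {T U : Submodule F V} {x : V} (hxU : x ∈ U)
    (hxT : x ∉ T) (hTU : T ≤ U) :
    {T' ∈ coversBetween F T U | x ∈ T'} = {T ⊔ F ∙ x} := by
  have hlt : T < T ⊔ F ∙ x := SetLike.lt_iff_le_and_exists.2
    ⟨le_sup_left, x, Submodule.mem_sup_right (Submodule.mem_span_singleton_self x), hxT⟩
  have hdim : finrank F ↥(T ⊔ F ∙ x) = finrank F T + 1 := by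
    have hsum := Submodule.finrank_sup_add_finrank_inf_eq T (F ∙ x)
    have hx : finrank F (F ∙ x) = 1 := finrank_span_singleton (fun h => hxT (h ▸ T.zero_mem))
    have := Submodule.finrank_lt_finrank_of_lt hlt
    omega
  ext T'
  simp only [coversBetween, Set.mem_ofPred_eq, Set.mem_singleton_iff]
  constructor
  · rintro ⟨⟨hT', hTT', -⟩, hxT'⟩
    have hle : T ⊔ F ∙ x ≤ T' :=
      sup_le hTT' ((Submodule.span_singleton_le_iff_mem x T').2 hxT')
    exact (Submodule.eq_of_le_of_finrank_eq hle (by rw [hT', hdim])).symm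
  · rintro rfl
    exact ⟨⟨hdim, le_sup_left, sup_le hTU ((Submodule.span_singleton_le_iff_mem x U).2 hxU)⟩,
      Submodule.mem_sup_right (Submodule.mem_span_singleton_self x)⟩

lemma finrank_inf_add_one_of_not_le {H U : Submodule F V} (hH : finrank F H + 1 = finrank F V)
    (hUH : ¬ U ≤ H) : finrank F ↥(U ⊓ H) + 1 = finrank F U := by
  have hlt : H < U ⊔ H := lt_of_le_of_ne le_sup_right (fun h => hUH (h ▸ le_sup_left))
  have := Submodule.finrank_lt_finrank_of_lt hlt
  have := Submodule.finrank_le (U ⊔ H)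
  have := Submodule.finrank_sup_add_finrank_inf_eq U H
  omega

end Geometry

section Counting

variable {F V : Type*} [Field F] [Fintype F] [AddCommGroup V] [Module F V] [Finite V]

lemma ncard_coe_submodule (W : Submodule F V) :
    (W : Set V).ncard = Fintype.card F ^ finrank F W := by
  classical
  have := Fintype.ofFinite V
  rw [← Nat.card_coe_set_eq, SetLike.coe_sort_coe, Nat.card_eq_fintype_card,
    Module.card_eq_pow_finrank (K := F)]

/-- Double count the pairs `(x, T')` with `x ∈ T' \ T`: each `x ∈ U \ T` lies only in
`T ⊔ F ∙ x`, and each `T'` contains `q ^ (dim T + 1) - q ^ dim T` such vectors. -/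
theorem ncard_coversBetween {T U : Submodule F V} (hTU : T ≤ U) :
    (coversBetween F T U).ncard = qNumber (Fintype.card F) (finrank F U - finrank F T) := by
  set q := Fintype.card F
  have hq : 1 < q := Fintype.one_lt_card
  have ncard_diff {A B : Submodule F V} (hAB : A ≤ B) :
      ((B : Set V) \ A).ncard = q ^ finrank F A * (q ^ (finrank F B - finrank F A) - 1) := by
    rw [Set.ncard_sdiff (by exact_mod_cast hAB), ncard_coe_submodule, ncard_coe_submodule,
      Nat.mul_sub_one, ← pow_add, Nat.add_sub_cancel' (Submodule.finrank_mono hAB)]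
  have hcount := Set.ncard_mul_eq_ncard_mul (fun x T' => x ∈ T') (m := 1)
    (s := (U : Set V) \ T) (t := coversBetween F T U)
    (fun x ⟨hxU, hxT⟩ => by
      rw [coversBetween_sep_mem_eq_singleton hxU hxT hTU, Set.ncard_singleton])
    (fun T' ⟨hT', hTT', hT'U⟩ => by
      rw [show {x ∈ (U : Set V) \ T | x ∈ T'} = (T' : Set V) \ T from
          Set.ext fun x => ⟨fun ⟨⟨_, h⟩, h'⟩ => ⟨h', h⟩,
            fun ⟨h', h⟩ => ⟨⟨hT'U h', h⟩, h'⟩⟩,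
        ncard_diff hTT', hT', Nat.add_sub_cancel_left])
  rw [ncard_diff hTU, mul_one, pow_one, ← qNumber_mul_sub_one hq.le] at hcount
  have hpos : 0 < q ^ finrank F T * (q - 1) := Nat.mul_pos (Nat.pow_pos (by omega)) (by omega)
  exact Nat.eq_of_mul_eq_mul_left hpos (by linarith)

theorem ncard_coversBetween_not_le {T U H : Submodule F V} (hH : finrank F H + 1 = finrank F V)
    (hTH : T ≤ H) (hTU : T ≤ U) (hUH : ¬ U ≤ H) :
    {T' ∈ coversBetween F T U | ¬ T' ≤ H}.ncard
      = Fintype.card F ^ (finrank F U - finrank F T - 1) := by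
  have hdim := finrank_inf_add_one_of_not_le hH hUH
  have hsub : coversBetween F T (U ⊓ H) ⊆ coversBetween F T U :=
    fun T' ⟨h₁, h₂, h₃⟩ => ⟨h₁, h₂, h₃.trans inf_le_left⟩
  have hT : finrank F T ≤ finrank F ↥(U ⊓ H) := Submodule.finrank_mono (le_inf hTU hTH)
  rw [show {T' ∈ coversBetween F T U | ¬ T' ≤ H}
        = coversBetween F T U \ coversBetween F T (U ⊓ H) by
      ext T'
      simp only [coversBetween, le_inf_iff, Set.mem_sdiff, Set.mem_ofPred_eq]
      tauto,
    Set.ncard_sdiff hsub, ncard_coversBetween hTU, ncard_coversBetween (le_inf hTU hTH),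
    show finrank F U - finrank F T = (finrank F ↥(U ⊓ H) - finrank F T) + 1 by omega,
    qNumber_succ, Nat.add_sub_cancel_left, Nat.add_sub_cancel]

end Counting

namespace IsSubspaceDesign

variable {F V : Type*} [Field F] [Fintype F] [AddCommGroup V] [Module F V] [Finite V]
  {t k lam : ℕ} {B : Set (Submodule F V)}

theorem ncard_containing_mul (hB : IsSubspaceDesign (t + 1) k lam B) {T : Submodule F V}
    (hT : finrank F T = t) :
    {W ∈ B | T ≤ W}.ncard * qNumber (Fintype.card F) (k - t)
      = qNumber (Fintype.card F) (finrank F V - t) * lam := by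
  have hcount := Set.ncard_mul_eq_ncard_mul (fun W T' => T' ≤ W)
    (s := {W ∈ B | T ≤ W}) (t := coversBetween F T ⊤)
    (fun W ⟨hWB, hTW⟩ => by
      rw [show {T' ∈ coversBetween F T ⊤ | T' ≤ W} = coversBetween F T W by
          ext T'; simp only [coversBetween, le_top, and_true, Set.mem_ofPred_eq, and_assoc],
        ncard_coversBetween hTW, hB.1 W hWB, hT])
    (fun T' ⟨hT', hTT', _⟩ => by
      rw [show {W ∈ {W ∈ B | T ≤ W} | T' ≤ W} = {W ∈ B | T' ≤ W} from
          Set.ext fun W => ⟨fun ⟨⟨h, _⟩, h'⟩ => ⟨h, h'⟩,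
            fun ⟨h, h'⟩ => ⟨⟨h, hTT'.trans h'⟩, h'⟩⟩,
        hB.2 T' (by rw [hT', hT])])
  rwa [ncard_coversBetween le_top, finrank_top, hT] at hcount

theorem ncard_containing_not_le_mul (hB : IsSubspaceDesign (t + 1) k lam B)
    {T H : Submodule F V} (hT : finrank F T = t) (hH : finrank F H + 1 = finrank F V)
    (hTH : T ≤ H) :
    {W ∈ B | T ≤ W ∧ ¬ W ≤ H}.ncard * Fintype.card F ^ (k - t - 1)
      = Fintype.card F ^ (finrank F V - t - 1) * lam := by
  have htop : ¬ (⊤ : Submodule F V) ≤ H := fun h => by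
    have := Submodule.finrank_mono h; rw [finrank_top] at this; omega
  have hcount := Set.ncard_mul_eq_ncard_mul (fun W T' => T' ≤ W)
    (s := {W ∈ B | T ≤ W ∧ ¬ W ≤ H}) (t := {T' ∈ coversBetween F T ⊤ | ¬ T' ≤ H})
    (fun W ⟨hWB, hTW, hWH⟩ => by
      rw [show {T' ∈ {T' ∈ coversBetween F T ⊤ | ¬ T' ≤ H} | T' ≤ W}
          = {T' ∈ coversBetween F T W | ¬ T' ≤ H} by
          ext T'; simp only [coversBetween, le_top, and_true, Set.mem_ofPred_eq]; tauto,
        ncard_coversBetween_not_le hH hTH hTW hWH, hB.1 W hWB, hT])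
    (fun T' ⟨⟨hT', hTT', _⟩, hT'H⟩ => by
      rw [show {W ∈ {W ∈ B | T ≤ W ∧ ¬ W ≤ H} | T' ≤ W} = {W ∈ B | T' ≤ W} from
          Set.ext fun W => ⟨fun ⟨⟨h, _⟩, h'⟩ => ⟨h, h'⟩,
            fun ⟨h, h'⟩ => ⟨⟨h, hTT'.trans h', fun hWH => hT'H (h'.trans hWH)⟩, h'⟩⟩,
        hB.2 T' (by rw [hT', hT])])
  rwa [ncard_coversBetween_not_le hH hTH le_top htop, finrank_top, hT] at hcount

/-- The blocks through `T` inside `H` are those through `T` minus those that leave `H`. -/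
theorem ncard_containing_le_mul (hB : IsSubspaceDesign (t + 1) k lam B)
    {T H : Submodule F V} (hT : finrank F T = t) (hH : finrank F H + 1 = finrank F V)
    (hTH : T ≤ H) (htk : t < k) (hkv : k ≤ finrank F V) :
    {W ∈ B | T ≤ W ∧ W ≤ H}.ncard * qNumber (Fintype.card F) (k - t)
      = lam * qNumber (Fintype.card F) (finrank F V - k) := by
  set q := Fintype.card F
  set v := finrank F V
  have hsplit : {W ∈ B | T ≤ W}.ncard
      = {W ∈ B | T ≤ W ∧ W ≤ H}.ncard + {W ∈ B | T ≤ W ∧ ¬ W ≤ H}.ncard := by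
    rw [← Set.ncard_union_eq (Set.disjoint_left.2 fun _ h h' => h'.2.2 h.2.2)]
    congr 1
    ext W
    simp only [Set.mem_union, Set.mem_ofPred_eq]
    tauto
  have hout : {W ∈ B | T ≤ W ∧ ¬ W ≤ H}.ncard = q ^ (v - k) * lam := by
    have h := hB.ncard_containing_not_le_mul hT hH hTH
    rw [show v - t - 1 = (v - k) + (k - t - 1) by omega, pow_add] at h
    exact Nat.eq_of_mul_eq_mul_right (Nat.pow_pos (n := k - t - 1) Fintype.card_pos)
      (by linarith)
  have hall := hB.ncard_containing_mul hT
  rw [hsplit, hout, show v - t = (v - k) + (k - t) by omega, qNumber_add] at hall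
  linarith

end IsSubspaceDesign

lemma Submodule.finrank_map_of_injective {R M M' : Type*} [Ring R] [AddCommGroup M] [Module R M]
    [AddCommGroup M'] [Module R M'] {f : M →ₗ[R] M'} (hf : Function.Injective f)
    (U : Submodule R M) : finrank R (U.map f) = finrank R U :=
  (Submodule.equivMapOfInjective f hf U).finrank_eq.symm

lemma exists_submodule_finrank_eq {K V : Type*} [DivisionRing K] [AddCommGroup V] [Module K V]
    [FiniteDimensional K V] {d : ℕ} (hd : d ≤ finrank K V) :
    ∃ W : Submodule K V, finrank K W = d := by
  obtain ⟨f, hf⟩ := finrank_le_iff_exists_linearMap.1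
    (by rwa [Module.finrank_fin_fun] : finrank K (Fin d → K) ≤ finrank K V)
  exact ⟨LinearMap.range f, by rw [LinearMap.finrank_range_of_inj hf, Module.finrank_fin_fun]⟩

section Residual

variable {F V V' : Type*} [Field F] [AddCommGroup V] [Module F V] [AddCommGroup V'] [Module F V']

variable (ι : V' →ₗ[F] V) in
/-- The blocks of `B` inside the image `H` of the embedding `ι`, transported back to `V'`. -/
def residualDesign (B : Set (Submodule F V)) : Set (Submodule F V') :=
  Submodule.map ι ⁻¹' B

lemma ncard_residualDesign_containing {ι : V' →ₗ[F] V} (hι : Function.Injective ι)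
    (B : Set (Submodule F V)) (T : Submodule F V') :
    {U ∈ residualDesign ι B | T ≤ U}.ncard
      = {W ∈ B | T.map ι ≤ W ∧ W ≤ LinearMap.range ι}.ncard := by
  rw [← Set.ncard_image_of_injective _ (Submodule.map_injective_of_injective hι)]
  congr 1
  ext W
  constructor
  · rintro ⟨U, ⟨hU, hTU⟩, rfl⟩
    exact ⟨hU, Submodule.map_mono hTU, LinearMap.map_le_range⟩
  · rintro ⟨hW, hTW, hWH⟩
    refine ⟨W.comap ι, ⟨?_, Submodule.map_le_iff_le_comap.1 hTW⟩,
      Submodule.map_comap_eq_self hWH⟩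
    rwa [residualDesign, Set.mem_preimage, Submodule.map_comap_eq_self hWH]

variable [Fintype F] [Finite V] {ι : V' →ₗ[F] V} {t k lam : ℕ}
  {B : Set (Submodule F V)}

theorem IsSubspaceDesign.ncard_residual_containing_mul (hB : IsSubspaceDesign (t + 1) k lam B)
    (hι : Function.Injective ι) (hV' : finrank F V' + 1 = finrank F V) (htk : t < k)
    (hkv : k ≤ finrank F V) {T : Submodule F V'} (hT : finrank F T = t) :
    {U ∈ residualDesign ι B | T ≤ U}.ncard * qNumber (Fintype.card F) (k - t)
      = lam * qNumber (Fintype.card F) (finrank F V - k) := by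
  rw [ncard_residualDesign_containing hι]
  exact hB.ncard_containing_le_mul (by rw [Submodule.finrank_map_of_injective hι, hT])
    (by rwa [LinearMap.finrank_range_of_inj hι]) LinearMap.map_le_range htk hkv

theorem IsSubspaceDesign.residual (hB : IsSubspaceDesign (t + 1) k lam B)
    (hι : Function.Injective ι) (hV' : finrank F V' + 1 = finrank F V) (htk : t < k)
    (hkv : k ≤ finrank F V) {lam' : ℕ}
    (hlam' : lam' * qNumber (Fintype.card F) (k - t)
      = lam * qNumber (Fintype.card F) (finrank F V - k)) :
    IsSubspaceDesign t k lam' (residualDesign ι B) :=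
  ⟨fun U hU => Submodule.finrank_map_of_injective hι U ▸ hB.1 _ hU, fun _ hT =>
    Nat.eq_of_mul_eq_mul_right (qNumber_pos _ (Nat.sub_pos_of_lt htk))
      ((hB.ncard_residual_containing_mul hι hV' htk hkv hT).trans hlam'.symm)⟩

theorem IsLargeSet.residual {N : ℕ} {P : Fin N → Set (Submodule F V)}
    (hP : IsLargeSet N (t + 1) k lam P) (hι : Function.Injective ι)
    (hV' : finrank F V' + 1 = finrank F V) (htk : t < k) (hkv : k < finrank F V) :
    ∃ lam', lam' * qNumber (Fintype.card F) (k - t)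
        = lam * qNumber (Fintype.card F) (finrank F V - k) ∧
      IsLargeSet N t k lam' (fun i => residualDesign ι (P i)) := by
  obtain ⟨hdisj, hcover, hdes⟩ := hP
  -- `λ'` is read off one part `i₀` (which exists because the `k`-subspaces are covered) and one
  -- `t`-subspace `T₀`; the counting identity is the same for every other choice.
  obtain ⟨W₀, hW₀⟩ := exists_submodule_finrank_eq hkv.le
  obtain ⟨i₀, -⟩ := Set.mem_iUnion.1 (hcover ▸ hW₀ : W₀ ∈ ⋃ i, P i)
  have : Finite V' := Finite.of_injective ι hι
  obtain ⟨T₀, hT₀⟩ := exists_submodule_finrank_eq (K := F) (V := V') (d := t) (by omega)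
  refine ⟨_, (hdes i₀).ncard_residual_containing_mul hι hV' htk hkv.le hT₀,
    fun i j hij => (hdisj hij).preimage _, ?_, fun i => (hdes i).residual hι hV' htk hkv.le
      ((hdes i₀).ncard_residual_containing_mul hι hV' htk hkv.le hT₀)⟩
  ext U
  simp only [residualDesign, ← Set.preimage_iUnion, hcover, Set.mem_preimage, Set.mem_ofPred_eq,
    Submodule.finrank_map_of_injective hι]

end Residual

theorem existsLargeSet_residual_general (q N t k v : ℕ)
    (ht : 1 ≤ t) (htk : t ≤ k) (hkv : k + 1 ≤ v)
    (h : ExistsLargeSet q N t k v) :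
    ExistsLargeSet q N (t - 1) k (v - 1) := by
  intro F _ _ hF
  obtain ⟨lam, hlam, P, hP⟩ := h F hF
  obtain ⟨s, rfl⟩ : ∃ s, t = s + 1 := ⟨t - 1, by omega⟩
  obtain ⟨ι, hι⟩ := finrank_le_iff_exists_linearMap.1
    (by simp : finrank F (Fin (v - 1) → F) ≤ finrank F (Fin v → F))
  obtain ⟨lam', hlam', hP'⟩ :=
    hP.residual hι (by simp only [Module.finrank_fin_fun]; omega) (by omega) (by simpa)
  refine ⟨lam', ?_, _, hP'⟩
  rw [Module.finrank_fin_fun, hF] at hlam'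
  have habsorb := gaussBinom_succ_mul_qNumber q (v - (s + 1)) (k - (s + 1))
  rw [show k - (s + 1) + 1 = k - s by omega, show v - (s + 1) - (k - (s + 1)) = v - k by omega,
    ← hlam] at habsorb
  rw [Nat.add_sub_cancel, show v - 1 - s = v - (s + 1) by omega]
  refine Nat.eq_of_mul_eq_mul_right (qNumber_pos q (Nat.sub_pos_of_lt htk)) ?_
  rw [habsorb, mul_assoc, hlam', mul_assoc]

/-- Residual large set: if a large set `LS_q[N](t, k, v)` exists (with
`1 ≤ t ≤ k ≤ v - 1` and `N ≥ 2`), then a large set `LS_q[N](t-1, k, v-1)` exists. -/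
theorem existsLargeSet_residual (q N t k v : ℕ) (hq : IsPrimePow q)
    (ht : 1 ≤ t) (htk : t ≤ k) (hkv : k + 1 ≤ v) (hN : 2 ≤ N)
    (h : ExistsLargeSet q N t k v) :
    ExistsLargeSet q N (t - 1) k (v - 1) :=
  existsLargeSet_residual_general q N t k v ht htk hkv h
end
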